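/- arXiv:2408.16824 — 2 statements merged into one kernel-verified Lean document; each statement's English description precedes it below -/
import Mathlib

section
/- Let $A$ be a Hermitian operator on a finite-dimensional Hilbert space $\mathcal{H}_s$ with $\|A\| \leq 1$, let $U = e^{i\arccos(A)}$, and let $U_A = (H \otimes I_s)\big(|0\rangle\langle 0| \otimes U + |1\rangle\langle 1| \otimes U^\dagger\big)(H \otimes I_s)$. Let $S' = Z \otimes I_s$ where $Z$ is the Pauli-Z gate on the ancilla. Then $S' U_A = U_A^\dagger S'$, and consequently $(\langle 0| \otimes I_s)\,(S' U_A)^2\,(|0\rangle \otimes I_s) = I_s$ and $(\langle 0| \otimes I_s)\, S' U_A \,(|0\rangle \otimes I_s) = A$. -/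
open Matrix Kronecker
open scoped Matrix.Norms.L2Operator

/-- Functional calculus for a Hermitian matrix: apply `f : ℝ → ℂ` to the eigenvalues in a
spectral decomposition `A = U diag(λ) U†`. -/
noncomputable def hermFC {ι : Type*} [Fintype ι] [DecidableEq ι] {A : Matrix ι ι ℂ}
    (hA : A.IsHermitian) (f : ℝ → ℂ) : Matrix ι ι ℂ :=
  (hA.eigenvectorUnitary : Matrix ι ι ℂ) *
    Matrix.diagonal (fun i => f (hA.eigenvalues i)) *
      star (hA.eigenvectorUnitary : Matrix ι ι ℂ)

/-- The Hadamard gate. -/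
noncomputable def Hgate : Matrix (Fin 2) (Fin 2) ℂ :=
  ((Real.sqrt 2 : ℝ) : ℂ)⁻¹ • !![1, 1; 1, -1]

/-- The Pauli-Z gate. -/
def Zgate : Matrix (Fin 2) (Fin 2) ℂ := !![1, 0; 0, -1]

/-!
Write `M = !![1, 1; -1, -1]`. Multiplying out the Hadamard conjugation gives
`S' U_A = ½ (M ⊗ U + M† ⊗ U†)`, which is self-adjoint; since `S'` is self-adjoint too, this is
`S' U_A = U_A† S'`. As `M² = 0` and `M M† + M† M = 4`, unitarity of `U` gives `(S' U_A)² = 1`.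
Finally the `|0⟩⟨0|` corner of `S' U_A` is `½ (U + U†) = cos (arccos A) = A`, which needs the
spectrum of `A` to lie in `[-1, 1]`.
-/

section HermFC

variable {ι : Type*} [Fintype ι] [DecidableEq ι] {A : Matrix ι ι ℂ} (hA : A.IsHermitian)

theorem hermFC_mul (f g : ℝ → ℂ) :
    hermFC hA f * hermFC hA g = hermFC hA (fun x => f x * g x) := by
  have hV : star (hA.eigenvectorUnitary : Matrix ι ι ℂ) * hA.eigenvectorUnitary = 1 :=
    Unitary.star_mul_self_of_mem hA.eigenvectorUnitary.2
  simp only [hermFC, Matrix.mul_assoc]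
  rw [← Matrix.mul_assoc (star _) (hA.eigenvectorUnitary : Matrix ι ι ℂ), hV, Matrix.one_mul,
    ← Matrix.mul_assoc (diagonal _), diagonal_mul_diagonal]

theorem hermFC_add (f g : ℝ → ℂ) :
    hermFC hA f + hermFC hA g = hermFC hA (fun x => f x + g x) := by
  simp only [hermFC, ← Matrix.add_mul, ← Matrix.mul_add, diagonal_add]

theorem hermFC_star (f : ℝ → ℂ) : star (hermFC hA f) = hermFC hA (fun x => star (f x)) := by
  simp only [hermFC, star_mul, star_star, Matrix.mul_assoc, star_eq_conjTranspose (diagonal _),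
    diagonal_conjTranspose]
  rfl

theorem hermFC_congr {f g : ℝ → ℂ} (h : ∀ i, f (hA.eigenvalues i) = g (hA.eigenvalues i)) :
    hermFC hA f = hermFC hA g := by
  simp only [hermFC, h]

theorem hermFC_one : hermFC hA (fun _ => 1) = 1 := by
  simp [hermFC, Unitary.mul_star_self_of_mem hA.eigenvectorUnitary.2]

theorem hermFC_ofReal : hermFC hA (fun x => (x : ℂ)) = A :=
  hA.spectral_theorem.symm

theorem hermFC_mem_unitary {f : ℝ → ℂ} (hf : ∀ x, star (f x) * f x = 1) :
    hermFC hA f ∈ unitary (Matrix ι ι ℂ) := by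
  rw [Unitary.mem_iff, hermFC_star, hermFC_mul, hermFC_mul]
  simp only [hf, mul_comm (f _), hermFC_one, and_self]

theorem Matrix.IsHermitian.abs_eigenvalues_le_l2_opNorm (i : ι) : |hA.eigenvalues i| ≤ ‖A‖ := by
  have : Nonempty ι := ⟨i⟩
  simpa using spectrum.norm_le_norm_of_mem (𝕜 := ℂ)
    ((spectrum.algebraMap_mem_iff ℂ).mpr (hA.eigenvalues_mem_spectrum_real i))

end HermFC

theorem star_exp_I_mul_ofReal (θ : ℝ) :
    star (Complex.exp (Complex.I * θ)) = Complex.exp (-(Complex.I * θ)) := by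
  rw [Complex.star_def, ← Complex.exp_conj]
  simp

section ArccosPhase

variable {ι : Type*} [Fintype ι] [DecidableEq ι] {A : Matrix ι ι ℂ} (hA : A.IsHermitian)

theorem hermFC_exp_I_arccos_mem_unitary :
    hermFC hA (fun x => Complex.exp (Complex.I * (Real.arccos x : ℂ))) ∈
      unitary (Matrix ι ι ℂ) :=
  hermFC_mem_unitary hA fun x => by
    rw [star_exp_I_mul_ofReal, ← Complex.exp_add, neg_add_cancel, Complex.exp_zero]

theorem hermFC_exp_I_arccos_add_star (hnorm : ‖A‖ ≤ 1) :
    hermFC hA (fun x => Complex.exp (Complex.I * (Real.arccos x : ℂ))) +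
        star (hermFC hA (fun x => Complex.exp (Complex.I * (Real.arccos x : ℂ)))) = A + A := by
  rw [hermFC_star, hermFC_add, hermFC_congr hA (g := fun x => (x : ℂ) + x) fun i => ?_,
    ← hermFC_add, hermFC_ofReal]
  obtain ⟨hlo, hhi⟩ := abs_le.mp ((hA.abs_eigenvalues_le_l2_opNorm i).trans hnorm)
  rw [star_exp_I_mul_ofReal, mul_comm Complex.I, ← neg_mul, ← Complex.two_cos,
    ← Complex.ofReal_cos, Real.cos_arccos hlo hhi, two_mul]

end ArccosPhase

theorem submatrix_kronecker_prodMk {R : Type*} [Mul R] {l m n p : Type*} (M : Matrix l m R)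
    (N : Matrix n p R) (i : l) (j : m) :
    (M ⊗ₖ N).submatrix (fun s => (i, s)) (fun t => (j, t)) = M i j • N := by
  ext s t
  simp

section Kronecker

variable {R : Type*} [CommRing R] [StarRing R] {m n : Type*}

theorem star_kronecker (M : Matrix m m R) (N : Matrix n n R) :
    star (M ⊗ₖ N) = star M ⊗ₖ star N :=
  conjTranspose_kronecker M N

theorem isSelfAdjoint_kronecker_add_star (M : Matrix m m R) (U : Matrix n n R) :
    IsSelfAdjoint (M ⊗ₖ U + star M ⊗ₖ star U) := by
  rw [IsSelfAdjoint, star_add, star_kronecker, star_kronecker, star_star, star_star, add_comm]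

theorem kronecker_add_star_mul_self [Fintype m] [Fintype n] [DecidableEq n] {M : Matrix m m R}
    (hM : M * M = 0) {U : Matrix n n R} (hU : U ∈ unitary (Matrix n n R)) :
    (M ⊗ₖ U + star M ⊗ₖ star U) * (M ⊗ₖ U + star M ⊗ₖ star U) =
      (M * star M + star M * M) ⊗ₖ 1 := by
  have hM' : star M * star M = 0 := by rw [← star_mul, hM, star_zero]
  simp only [Matrix.mul_add, Matrix.add_mul, ← mul_kronecker_mul, hM, hM', zero_kronecker,
    Unitary.star_mul_self_of_mem hU, Unitary.mul_star_self_of_mem hU, add_kronecker]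
  abel

end Kronecker

def lcuCoin : Matrix (Fin 2) (Fin 2) ℂ := !![1, 1; -1, -1]

theorem lcuCoin_mul_self : lcuCoin * lcuCoin = 0 := by
  rw [lcuCoin, mul_fin_two, eta_fin_two (0 : Matrix (Fin 2) (Fin 2) ℂ)]
  norm_num

theorem lcuCoin_mul_star_add_star_mul :
    lcuCoin * star lcuCoin + star lcuCoin * lcuCoin = (4 : ℂ) • 1 := by
  rw [eta_fin_two (star _), one_fin_two, lcuCoin]
  norm_num [mul_fin_two]

theorem Zgate_mul_Hgate_mul_mul_Hgate (X : Matrix (Fin 2) (Fin 2) ℂ) :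
    Zgate * Hgate * X * Hgate = (2 : ℂ)⁻¹ • (Zgate * !![1, 1; 1, -1] * X * !![1, 1; 1, -1]) := by
  have h : ((Real.sqrt 2 : ℝ) : ℂ)⁻¹ * ((Real.sqrt 2 : ℝ) : ℂ)⁻¹ = 2⁻¹ := by
    rw [← mul_inv, ← Complex.ofReal_mul, Real.mul_self_sqrt zero_le_two, Complex.ofReal_ofNat]
  simp only [Hgate, Matrix.mul_smul, Matrix.smul_mul, smul_smul, h]

theorem Zgate_mul_Hgate_mul_single_zero_mul_Hgate :
    Zgate * Hgate * single 0 0 1 * Hgate = (2 : ℂ)⁻¹ • lcuCoin := by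
  rw [Zgate_mul_Hgate_mul_mul_Hgate, eta_fin_two (single _ _ _), lcuCoin]
  norm_num [Zgate, mul_fin_two]

theorem Zgate_mul_Hgate_mul_single_one_mul_Hgate :
    Zgate * Hgate * single 1 1 1 * Hgate = (2 : ℂ)⁻¹ • star lcuCoin := by
  rw [Zgate_mul_Hgate_mul_mul_Hgate, eta_fin_two (single _ _ _), eta_fin_two (star _), lcuCoin]
  norm_num [Zgate, mul_fin_two]

theorem star_Zgate : star Zgate = Zgate := by
  ext i j
  fin_cases i <;> fin_cases j <;> simp [Zgate]

section Reflection

variable {ι : Type*}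

noncomputable def lcuReflection (U : Matrix ι ι ℂ) : Matrix (Fin 2 × ι) (Fin 2 × ι) ℂ :=
  (2 : ℂ)⁻¹ • (lcuCoin ⊗ₖ U + star lcuCoin ⊗ₖ star U)

theorem Zgate_kronecker_one_mul_lcu [Fintype ι] [DecidableEq ι] (U : Matrix ι ι ℂ) :
    Zgate ⊗ₖ (1 : Matrix ι ι ℂ) * ((Hgate ⊗ₖ (1 : Matrix ι ι ℂ)) *
      (single (0 : Fin 2) 0 (1 : ℂ) ⊗ₖ U + single (1 : Fin 2) 1 (1 : ℂ) ⊗ₖ star U) *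
        (Hgate ⊗ₖ (1 : Matrix ι ι ℂ))) = lcuReflection U := by
  simp only [Matrix.mul_add, Matrix.add_mul, ← Matrix.mul_assoc, ← mul_kronecker_mul,
    Matrix.mul_one, Matrix.one_mul, Zgate_mul_Hgate_mul_single_zero_mul_Hgate,
    Zgate_mul_Hgate_mul_single_one_mul_Hgate, smul_kronecker, lcuReflection, smul_add]

theorem isSelfAdjoint_lcuReflection (U : Matrix ι ι ℂ) : IsSelfAdjoint (lcuReflection U) :=
  .smul (by simp [IsSelfAdjoint]) (isSelfAdjoint_kronecker_add_star _ U)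

theorem lcuReflection_mul_self [Fintype ι] [DecidableEq ι] {U : Matrix ι ι ℂ} (hU : U ∈ unitary (Matrix ι ι ℂ)) :
    lcuReflection U * lcuReflection U = 1 := by
  rw [lcuReflection, smul_mul_smul, kronecker_add_star_mul_self lcuCoin_mul_self hU,
    lcuCoin_mul_star_add_star_mul, smul_kronecker, one_kronecker_one, smul_smul]
  norm_num

theorem lcuReflection_submatrix_zero (U : Matrix ι ι ℂ) :
    (lcuReflection U).submatrix (fun s => ((0 : Fin 2), s)) (fun t => ((0 : Fin 2), t)) =
      (2 : ℂ)⁻¹ • (U + star U) := by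
  simp only [lcuReflection, submatrix_smul, submatrix_add, Pi.smul_apply, Pi.add_apply,
    submatrix_kronecker_prodMk]
  simp [lcuCoin]

end Reflection

/-- Qubitization of LOVE-LCU: with `S' = Z ⊗ I`, we have `S' U_A = U_A† S'`, hence
`(⟨0| ⊗ I)(S' U_A)²(|0⟩ ⊗ I) = I` and `(⟨0| ⊗ I) S' U_A (|0⟩ ⊗ I) = A`. -/
theorem love_lcu_qubitization {ι : Type*} [Fintype ι] [DecidableEq ι]
    (A : Matrix ι ι ℂ) (hA : A.IsHermitian) (hnorm : ‖A‖ ≤ 1)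
    (U : Matrix ι ι ℂ)
    (hUdef : U = hermFC hA (fun x => Complex.exp (Complex.I * (Real.arccos x : ℂ))))
    (UA : Matrix (Fin 2 × ι) (Fin 2 × ι) ℂ)
    (hUA : UA = (Hgate ⊗ₖ (1 : Matrix ι ι ℂ)) *
        (Matrix.single (0 : Fin 2) 0 (1 : ℂ) ⊗ₖ U +
          Matrix.single (1 : Fin 2) 1 (1 : ℂ) ⊗ₖ star U) *
        (Hgate ⊗ₖ (1 : Matrix ι ι ℂ)))
    (S' : Matrix (Fin 2 × ι) (Fin 2 × ι) ℂ)
    (hS' : S' = Zgate ⊗ₖ (1 : Matrix ι ι ℂ)) :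
    S' * UA = star UA * S' ∧
    ((S' * UA) * (S' * UA)).submatrix
        (fun s : ι => ((0 : Fin 2), s)) (fun t : ι => ((0 : Fin 2), t)) = 1 ∧
    (S' * UA).submatrix (fun s : ι => ((0 : Fin 2), s)) (fun t : ι => ((0 : Fin 2), t)) = A := by
  subst hUA hS'
  have hU : U ∈ unitary (Matrix ι ι ℂ) := hUdef ▸ hermFC_exp_I_arccos_mem_unitary hA
  have hW := Zgate_kronecker_one_mul_lcu U
  refine ⟨?_, ?_, ?_⟩
  · calc _ = star (lcuReflection U) := hW.trans (isSelfAdjoint_lcuReflection U).symm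
      _ = _ := by rw [← hW, star_mul, star_kronecker, star_Zgate, star_one]
  · rw [hW, lcuReflection_mul_self hU]
    exact submatrix_one _ (Prod.mk_right_injective 0)
  · rw [hW, lcuReflection_submatrix_zero, hUdef, hermFC_exp_I_arccos_add_star hA hnorm,
      ← two_smul ℂ A, inv_smul_smul₀ two_ne_zero]
end

section
/- Let $\hat H = \sum_{j=0}^{M-1} \beta_j \hat H_j$ with each $\hat H_j$ Hermitian on $\mathcal{H}_s$, $\|\hat H_j\| \leq 1$, and $\beta_j > 0$ real. Suppose $U_j$ are unitaries on $\mathcal{H}_a \otimes \mathcal{H}_s$ and $S_a$ is a unitary on $\mathcal{H}_a$ such that for every $j$: $(\langle 0|_a \otimes I_s)(S_a \otimes I_s)U_j(|0\rangle_a \otimes I_s) = \hat H_j$ and $(\langle 0|_a \otimes I_s)\big[(S_a \otimes I_s)U_j\big]^2(|0\rangle_a \otimes I_s) = I_s$. Let $\mathrm{PREP}$ be a unitary on $\mathbb{C}^M$ with $\mathrm{PREP}|0\rangle = \frac{1}{\sqrt{\|\beta\|_1}}\sum_{j} \sqrt{\beta_j}|j\rangle$, where $\|\beta\|_1 = \sum_j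 \beta_j$, and let $U_{\hat H} = (\mathrm{PREP}^\dagger \otimes I_{as})\big(\sum_j |j\rangle\langle j| \otimes U_j\big)(\mathrm{PREP} \otimes I_{as})$. Then, with $S' = I_{a_\Lambda} \otimes S_a \otimes I_s$: (i) $(\langle 0|_{a_\Lambda} \otimes \langle 0|_a \otimes I_s)\, S' U_{\hat H}\, (|0\rangle_{a_\Lambda} \otimes |0\rangle_a \otimes I_s) = \hat H / \|\beta\|_1$, and (ii) $(\langle 0|_{a_\Lambda} \otimes \langle 0|_a \otimes I_s)\, (S' U_{\hat H})^2\, (|0\rangle_{a_\Lambda} \otimes |0\rangle_a \otimes I_s) = I_s$. -/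
/-!
With `X = S_a ⊗ I_s`, the operator `S' = I ⊗ X` commutes past `PREP† ⊗ I` and is absorbed into
the select operator, so `S' U_Ĥ = (PREP† ⊗ I) SEL_X (PREP ⊗ I)` where `SEL_X` is block diagonal
with blocks `X U_j`. Because `PREP PREP† = I`, squaring this operator squares the blocks. Finally,
the `(|0⟩, |0⟩)`-block of `(PREP† ⊗ I) D (PREP ⊗ I)` for block-diagonal `D` is the average of the
blocks of `D` with weights `|PREP_{j0}|² = β_j / ‖β‖₁`; for `S' U_Ĥ` this gives `Ĥ / ‖β‖₁`, and for
its square it gives `I_s`.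
-/

open Matrix Kronecker
open scoped Matrix.Norms.L2Operator

namespace Matrix

variable {o m n p α : Type*} [DecidableEq o]

/-- Unlike `Matrix.blockDiagonal`, the block index is the first component. -/
def blockDiagonalFst [Zero α] (V : o → Matrix m n α) : Matrix (o × m) (o × n) α :=
  of fun x y => if x.1 = y.1 then V x.1 x.2 y.2 else 0

theorem blockDiagonalFst_apply [Zero α] (V : o → Matrix m n α) (x : o × m) (y : o × n) :
    blockDiagonalFst V x y = if x.1 = y.1 then V x.1 x.2 y.2 else 0 := rfl

variable [Fintype o] [Fintype n]

theorem blockDiagonalFst_mul_blockDiagonalFst [NonUnitalNonAssocSemiring α]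
    (V : o → Matrix m n α) (W : o → Matrix n p α) :
    blockDiagonalFst V * blockDiagonalFst W = blockDiagonalFst fun k => V k * W k := by
  ext ⟨i, a⟩ ⟨j, b⟩
  by_cases h : i = j <;>
    simp [mul_apply, Fintype.sum_prod_type, blockDiagonalFst_apply, h]

theorem one_kronecker_mul_blockDiagonalFst [NonAssocSemiring α] (X : Matrix m n α)
    (V : o → Matrix n p α) :
    ((1 : Matrix o o α) ⊗ₖ X) * blockDiagonalFst V = blockDiagonalFst fun k => X * V k := by
  ext ⟨i, a⟩ ⟨j, b⟩
  by_cases h : i = j <;>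
    simp [mul_apply, Fintype.sum_prod_type, blockDiagonalFst_apply, one_apply, h]

variable [Fintype m] [CommSemiring α] [StarRing α] [DecidableEq m]

def lcuOperator (P : Matrix o o α) (V : o → Matrix m m α) : Matrix (o × m) (o × m) α :=
  (Pᴴ ⊗ₖ (1 : Matrix m m α)) * blockDiagonalFst V * (P ⊗ₖ (1 : Matrix m m α))

theorem one_kronecker_mul_lcuOperator (P : Matrix o o α) (X : Matrix m m α)
    (V : o → Matrix m m α) :
    ((1 : Matrix o o α) ⊗ₖ X) * lcuOperator P V = lcuOperator P fun k => X * V k := by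
  have hcomm : ((1 : Matrix o o α) ⊗ₖ X) * (Pᴴ ⊗ₖ (1 : Matrix m m α)) =
      (Pᴴ ⊗ₖ (1 : Matrix m m α)) * ((1 : Matrix o o α) ⊗ₖ X) := by
    simp only [← mul_kronecker_mul, one_mul, mul_one]
  simp only [lcuOperator, ← mul_assoc, hcomm]
  rw [mul_assoc _ (1 ⊗ₖ X), one_kronecker_mul_blockDiagonalFst]

theorem lcuOperator_mul_lcuOperator {P : Matrix o o α} (hP : P * Pᴴ = 1)
    (V W : o → Matrix m m α) :
    lcuOperator P V * lcuOperator P W = lcuOperator P fun k => V k * W k := by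
  have hcancel : (P ⊗ₖ (1 : Matrix m m α)) * (Pᴴ ⊗ₖ (1 : Matrix m m α)) = 1 := by
    rw [← mul_kronecker_mul, hP, one_mul, one_kronecker_one]
  simp only [lcuOperator, mul_assoc]
  rw [← mul_assoc (P ⊗ₖ 1), hcancel, one_mul, ← mul_assoc (blockDiagonalFst V),
    blockDiagonalFst_mul_blockDiagonalFst]

theorem submatrix_lcuOperator {l : Type*} (P : Matrix o o α) (V : o → Matrix m m α)
    (i j : o) (f g : l → m) :
    (lcuOperator P V).submatrix (fun s => (i, f s)) (fun s => (j, g s)) =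
      ∑ k, (star (P k i) * P k j) • (V k).submatrix f g := by
  ext s t
  simp [lcuOperator, mul_apply, Fintype.sum_prod_type, blockDiagonalFst_apply, one_apply,
    Matrix.sum_apply, mul_right_comm]

end Matrix

theorem lcu_walk_operator_general {ι κ : Type*} [Fintype ι] [DecidableEq ι]
    [Fintype κ] [DecidableEq κ] (a0 : κ) (M : ℕ) (hM : 0 < M)
    (Hloc : Fin M → Matrix ι ι ℂ)
    (β : Fin M → ℝ) (hβ : ∀ j, 0 < β j)
    (Uj : Fin M → Matrix (κ × ι) (κ × ι) ℂ)
    (S : Matrix κ κ ℂ)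
    (hblock1 : ∀ j, ((S ⊗ₖ (1 : Matrix ι ι ℂ)) * Uj j).submatrix
        (fun s : ι => (a0, s)) (fun s : ι => (a0, s)) = Hloc j)
    (hblock2 : ∀ j, (((S ⊗ₖ (1 : Matrix ι ι ℂ)) * Uj j) *
        ((S ⊗ₖ (1 : Matrix ι ι ℂ)) * Uj j)).submatrix
        (fun s : ι => (a0, s)) (fun s : ι => (a0, s)) = 1)
    (PREP : Matrix (Fin M) (Fin M) ℂ) (hPREP : PREP ∈ Matrix.unitaryGroup (Fin M) ℂ)
    (hcol : ∀ j, PREP j ⟨0, hM⟩ =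
      ((Real.sqrt (β j) / Real.sqrt (∑ k, β k) : ℝ) : ℂ))
    (SEL : Matrix (Fin M × κ × ι) (Fin M × κ × ι) ℂ)
    (hSEL : ∀ j a s j' a' s', SEL (j, a, s) (j', a', s') =
      if j = j' then Uj j (a, s) (a', s') else 0)
    (UH : Matrix (Fin M × κ × ι) (Fin M × κ × ι) ℂ)
    (hUH : UH = (PREPᴴ ⊗ₖ (1 : Matrix (κ × ι) (κ × ι) ℂ)) * SEL *
        (PREP ⊗ₖ (1 : Matrix (κ × ι) (κ × ι) ℂ)))
    (S' : Matrix (Fin M × κ × ι) (Fin M × κ × ι) ℂ)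
    (hS' : S' = (1 : Matrix (Fin M) (Fin M) ℂ) ⊗ₖ (S ⊗ₖ (1 : Matrix ι ι ℂ))) :
    ((S' * UH).submatrix (fun s : ι => ((⟨0, hM⟩ : Fin M), a0, s))
        (fun s : ι => ((⟨0, hM⟩ : Fin M), a0, s)) =
      (((∑ k, β k : ℝ) : ℂ))⁻¹ • ∑ j, (β j : ℂ) • Hloc j) ∧
    (((S' * UH) * (S' * UH)).submatrix (fun s : ι => ((⟨0, hM⟩ : Fin M), a0, s))
        (fun s : ι => ((⟨0, hM⟩ : Fin M), a0, s)) = 1) := by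
  set z : Fin M := ⟨0, hM⟩
  set X := S ⊗ₖ (1 : Matrix ι ι ℂ)
  have hβsum : (0 : ℝ) < ∑ k, β k := Finset.sum_pos (fun k _ => hβ k) ⟨z, Finset.mem_univ z⟩
  have hweight : ∀ k, star (PREP k z) * PREP k z = ((β k / ∑ k, β k : ℝ) : ℂ) := by
    intro k
    rw [hcol, Complex.star_def, Complex.conj_ofReal, ← Complex.ofReal_mul, div_mul_div_comm,
      Real.mul_self_sqrt (hβ k).le, Real.mul_self_sqrt hβsum.le]
  have hUH' : UH = lcuOperator PREP Uj := by
    rw [hUH, lcuOperator]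
    congr
    ext ⟨j, a, s⟩ ⟨j', a', s'⟩
    exact hSEL j a s j' a' s'
  have hwalk : S' * UH = lcuOperator PREP fun k => X * Uj k := by
    rw [hS', hUH', one_kronecker_mul_lcuOperator]
  have hwalk_sq :
      (S' * UH) * (S' * UH) = lcuOperator PREP fun k => (X * Uj k) * (X * Uj k) := by
    rw [hwalk, lcuOperator_mul_lcuOperator (mem_unitaryGroup_iff.mp hPREP)]
  constructor
  · rw [hwalk, submatrix_lcuOperator]
    simp only [hblock1, hweight, Finset.smul_sum, smul_smul, div_eq_inv_mul,
      Complex.ofReal_mul, Complex.ofReal_inv]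
  · rw [hwalk_sq, submatrix_lcuOperator]
    simp only [hblock2, hweight]
    rw [← Finset.sum_smul, ← Complex.ofReal_sum, ← Finset.sum_div, div_self hβsum.ne',
      Complex.ofReal_one, one_smul]

/-- Lemma 3 of the paper: if the block encodings `U_j` of local Hamiltonian terms `Ĥ_j`
share a common qubitization operator `S_a` on the common ancilla register, then the LCU
combination `U_Ĥ = (PREP† ⊗ I) SEL (PREP ⊗ I)` is qubitized by
`S' = I_{a_Λ} ⊗ S_a ⊗ I_s`: the `(|0⟩,|0⟩)`-block of `S' U_Ĥ` is `Ĥ/‖β‖₁` and the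
`(|0⟩,|0⟩)`-block of `(S' U_Ĥ)²` is the identity. -/
theorem lcu_walk_operator {ι κ : Type*} [Fintype ι] [DecidableEq ι]
    [Fintype κ] [DecidableEq κ] (a0 : κ) (M : ℕ) (hM : 0 < M)
    (Hloc : Fin M → Matrix ι ι ℂ) (hHerm : ∀ j, (Hloc j).IsHermitian)
    (hHnorm : ∀ j, ‖Hloc j‖ ≤ 1)
    (β : Fin M → ℝ) (hβ : ∀ j, 0 < β j)
    (Uj : Fin M → Matrix (κ × ι) (κ × ι) ℂ)
    (hUj : ∀ j, Uj j ∈ Matrix.unitaryGroup (κ × ι) ℂ)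
    (S : Matrix κ κ ℂ) (hS : S ∈ Matrix.unitaryGroup κ ℂ)
    (hblock1 : ∀ j, ((S ⊗ₖ (1 : Matrix ι ι ℂ)) * Uj j).submatrix
        (fun s : ι => (a0, s)) (fun s : ι => (a0, s)) = Hloc j)
    (hblock2 : ∀ j, (((S ⊗ₖ (1 : Matrix ι ι ℂ)) * Uj j) *
        ((S ⊗ₖ (1 : Matrix ι ι ℂ)) * Uj j)).submatrix
        (fun s : ι => (a0, s)) (fun s : ι => (a0, s)) = 1)
    (PREP : Matrix (Fin M) (Fin M) ℂ) (hPREP : PREP ∈ Matrix.unitaryGroup (Fin M) ℂ)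
    (hcol : ∀ j, PREP j ⟨0, hM⟩ =
      ((Real.sqrt (β j) / Real.sqrt (∑ k, β k) : ℝ) : ℂ))
    (SEL : Matrix (Fin M × κ × ι) (Fin M × κ × ι) ℂ)
    (hSEL : ∀ j a s j' a' s', SEL (j, a, s) (j', a', s') =
      if j = j' then Uj j (a, s) (a', s') else 0)
    (UH : Matrix (Fin M × κ × ι) (Fin M × κ × ι) ℂ)
    (hUH : UH = (PREPᴴ ⊗ₖ (1 : Matrix (κ × ι) (κ × ι) ℂ)) * SEL *
        (PREP ⊗ₖ (1 : Matrix (κ × ι) (κ × ι) ℂ)))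
    (S' : Matrix (Fin M × κ × ι) (Fin M × κ × ι) ℂ)
    (hS' : S' = (1 : Matrix (Fin M) (Fin M) ℂ) ⊗ₖ (S ⊗ₖ (1 : Matrix ι ι ℂ))) :
    ((S' * UH).submatrix (fun s : ι => ((⟨0, hM⟩ : Fin M), a0, s))
        (fun s : ι => ((⟨0, hM⟩ : Fin M), a0, s)) =
      (((∑ k, β k : ℝ) : ℂ))⁻¹ • ∑ j, (β j : ℂ) • Hloc j) ∧
    (((S' * UH) * (S' * UH)).submatrix (fun s : ι => ((⟨0, hM⟩ : Fin M), a0, s))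
        (fun s : ι => ((⟨0, hM⟩ : Fin M), a0, s)) = 1) :=
  lcu_walk_operator_general a0 M hM Hloc β hβ Uj S hblock1 hblock2 PREP hPREP hcol SEL hSEL UH hUH
    S' hS'
end
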